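/- arXiv:2107.10422 — 7 statements merged into one kernel-verified Lean document; each statement's English description precedes it below -/
import Mathlib

section
/- Let σ : U → X be a local homeomorphism on an open subset U of a locally compact Hausdorff space X, and let U_n be the domain of σⁿ (defined by U_0 = X, U_{n+1} = {x ∈ U_n : σⁿ(x) ∈ U}). For n, m ∈ ℕ, ξ₁, η₁ ∈ C_c(U_n), ξ₂, η₂ ∈ C_c(U_m), define ξ(x) = ξ₁(x)·ξ₂(σⁿ(x)) and η(x) = η₁(x)·η₂(σⁿ(x)) on U_{n+m}, and define ⟨ξ,η⟩_n(x) = ∑_{σⁿ(y)=x} conj(ξ(y))·η(y). Then ⟨ξ₂, ⟨ξ₁,η₁⟩_n · η₂⟩_m = ⟨ξ, η⟩_{n+m}. -/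
/-- `Un σ U n` is the domain of the `n`-th iterate `σⁿ` of the partially defined
map `σ : U → X` (modelled as a total map together with its domain `U`). -/
def Un {X : Type*} (σ : X → X) (U : Set X) (n : ℕ) : Set X :=
  {x | ∀ j < n, σ^[j] x ∈ U}

/-- The "inner product" `⟨ξ,η⟩_n (x) = ∑_{σⁿ(y)=x} conj (ξ y) * η y`
(a finite sum in the situations of interest, formalized via `finsum`). -/
noncomputable def ipn {X : Type*} (σ : X → X) (n : ℕ) (ξ η : X → ℂ) (x : X) : ℂ :=
  ∑ᶠ y ∈ {y | σ^[n] y = x}, (starRingEnd ℂ) (ξ y) * η y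

/-! The fibre of `σ^[n+m]` over `x` is the disjoint union, over `z ∈ σ^[m] ⁻¹' {x}`, of the fibres
of `σ^[n]` over `z`; pulling `conj (ξ₂ z)` and `η₂ z` into the inner sum, the left-hand side is the
right-hand side regrouped along this decomposition. The regrouping is legitimate because only
finitely many terms are nonzero (otherwise `finsum` would return `0`): a local homeomorphism has
finite fibres inside compact subsets of its domain, and `ξ₁`, `ξ₂` have compact support in
`U_n`, `U_m`. -/

open Function Set Topology

theorem finsum_mem_preimage_comp {α β γ M : Type*} [AddCommMonoid M] (f : α → β) (g : β → γ)
    (F : α → M) (x : γ) (hF : ((g ∘ f) ⁻¹' {x} ∩ support F).Finite) :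
    ∑ᶠ z ∈ g ⁻¹' {x}, ∑ᶠ y ∈ f ⁻¹' {z}, F y = ∑ᶠ y ∈ (g ∘ f) ⁻¹' {x}, F y := by
  classical
  set s := hF.toFinset
  have hs : ∀ y, y ∈ s ↔ g (f y) = x ∧ F y ≠ 0 := fun y => by simp [s]
  have hinner : ∀ z ∈ s.image f, ∑ᶠ y ∈ f ⁻¹' {z}, F y = ∑ y ∈ s with f y = z, F y := by
    intro z hz
    obtain ⟨y₀, hy₀, rfl⟩ := Finset.mem_image.mp hz
    refine finsum_mem_eq_sum_of_subset _ (fun y ⟨hy, hFy⟩ => ?_) (fun y hy => ?_)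
    · simp only [mem_preimage, mem_singleton_iff] at hy
      simpa [hs, hy, (hs y₀).mp hy₀] using hFy
    · simp_all
  have houter : ∑ᶠ z ∈ g ⁻¹' {x}, ∑ᶠ y ∈ f ⁻¹' {z}, F y
      = ∑ z ∈ s.image f, ∑ᶠ y ∈ f ⁻¹' {z}, F y := by
    refine finsum_mem_eq_sum_of_subset _ (fun z ⟨hz, hne⟩ => ?_) (fun z hz => ?_)
    · obtain ⟨y, ⟨hy, rfl⟩, hFy⟩ := exists_ne_zero_of_finsum_mem_ne_zero hne
      simp only [mem_preimage, mem_singleton_iff] at hz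
      exact Finset.mem_image_of_mem f ((hs y).mpr ⟨hz, hFy⟩)
    · obtain ⟨y, hy, rfl⟩ := Finset.mem_image.mp hz
      exact ((hs y).mp hy).1
  rw [houter, Finset.sum_congr rfl hinner,
    Finset.sum_fiberwise_of_maps_to (fun y hy => Finset.mem_image_of_mem f hy),
    finsum_mem_eq_sum F hF]

namespace IsLocalHomeomorphOn

variable {X Y : Type*} [TopologicalSpace X] [TopologicalSpace Y] {f : X → Y} {s K : Set X}

theorem finite_inter_preimage_singleton (hf : IsLocalHomeomorphOn f s) (hK : IsCompact K)
    (hKs : K ⊆ s) (y : Y) : (K ∩ f ⁻¹' {y}).Finite := by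
  have hinj : ∀ x ∈ s, ∃ V ∈ 𝓝 x, InjOn f V := fun x hx => by
    obtain ⟨e, hxe, rfl⟩ := hf x hx
    exact ⟨e.source, e.open_source.mem_nhds hxe, e.injOn⟩
  choose V hV hVinj using hinj
  obtain ⟨t, hcover⟩ :=
    hK.elim_nhds_subcover' (fun x hx => V x (hKs hx)) (fun x hx => hV x (hKs hx))
  have hpiece (x : K) : (V x (hKs x.2) ∩ f ⁻¹' {y}).Finite :=
    Subsingleton.finite fun a ⟨ha, hay⟩ b ⟨hb, hby⟩ => hVinj _ _ ha hb (hay.trans hby.symm)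
  refine (t.finite_toSet.biUnion fun x _ => hpiece x).subset fun z ⟨hzK, hzy⟩ => ?_
  obtain ⟨x, hxt, hzx⟩ := mem_iUnion₂.mp (hcover hzK)
  exact mem_iUnion₂.mpr ⟨x, hxt, hzx, hzy⟩

theorem finite_inter_preimage (hf : IsLocalHomeomorphOn f s) (hK : IsCompact K) (hKs : K ⊆ s)
    {A : Set Y} (hA : A.Finite) : (K ∩ f ⁻¹' A).Finite := by
  rw [← biUnion_of_singleton A, preimage_iUnion₂, inter_iUnion₂]
  exact hA.biUnion fun y _ => hf.finite_inter_preimage_singleton hK hKs y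

end IsLocalHomeomorphOn

section Iterate

variable {X : Type*} {U : Set X} {σ : X → X}

theorem Un_succ_subset (n : ℕ) : Un σ U (n + 1) ⊆ Un σ U n :=
  fun _ hx j hj => hx j (Nat.lt_succ_of_lt hj)

theorem mapsTo_iterate_Un_succ (n : ℕ) : MapsTo σ^[n] (Un σ U (n + 1)) U :=
  fun _ hx => hx n (Nat.lt_succ_self n)

theorem IsLocalHomeomorphOn.iterate [TopologicalSpace X] (hσ : IsLocalHomeomorphOn σ U) (n : ℕ) :
    IsLocalHomeomorphOn σ^[n] (Un σ U n) := by
  induction n with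
  | zero => exact (Homeomorph.refl X).isLocalHomeomorph.isLocalHomeomorphOn
  | succ n ih =>
    rw [iterate_succ']
    exact hσ.comp (ih.mono (Un_succ_subset n)) (mapsTo_iterate_Un_succ n)

end Iterate

theorem stmt1_general {X : Type*} [TopologicalSpace X]
    {U : Set X} {σ : X → X} (hσ : IsLocalHomeomorphOn σ U)
    (n m : ℕ) (ξ₁ η₁ ξ₂ η₂ : X → ℂ)
    (h₁s : HasCompactSupport ξ₁) (h₁U : tsupport ξ₁ ⊆ Un σ U n)
    (h₃s : HasCompactSupport ξ₂) (h₃U : tsupport ξ₂ ⊆ Un σ U m) :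
    ipn σ m ξ₂ (fun y => ipn σ n ξ₁ η₁ y * η₂ y) =
      ipn σ (n + m) (fun x => ξ₁ x * ξ₂ (σ^[n] x)) (fun x => η₁ x * η₂ (σ^[n] x)) := by
  funext x
  set F : X → ℂ := fun y => starRingEnd ℂ (ξ₁ y * ξ₂ (σ^[n] y)) * (η₁ y * η₂ (σ^[n] y))
  have hfiber : ∀ z, starRingEnd ℂ (ξ₂ z) * (ipn σ n ξ₁ η₁ z * η₂ z)
      = ∑ᶠ y ∈ σ^[n] ⁻¹' {z}, F y := fun z => by
    rw [ipn, finsum_mem_mul, mul_finsum_mem]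
    refine finsum_mem_congr rfl fun y (hy : σ^[n] y = z) => ?_
    simp only [F, hy, map_mul]
    ring
  have hfinite : ((σ^[m] ∘ σ^[n]) ⁻¹' {x} ∩ support F).Finite := by
    have hsupp₂ := (hσ.iterate m).finite_inter_preimage h₃s.isCompact h₃U (finite_singleton x)
    refine ((hσ.iterate n).finite_inter_preimage h₁s.isCompact h₁U hsupp₂).subset ?_
    rintro y ⟨hyx, hFy⟩
    obtain ⟨⟨hξ₁, hξ₂⟩, -⟩ : (ξ₁ y ≠ 0 ∧ ξ₂ (σ^[n] y) ≠ 0) ∧ η₁ y ≠ 0 ∧ η₂ (σ^[n] y) ≠ 0 := by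
      simpa [F, not_or] using hFy
    exact ⟨subset_tsupport _ hξ₁, subset_tsupport _ hξ₂, hyx⟩
  calc ipn σ m ξ₂ (fun y => ipn σ n ξ₁ η₁ y * η₂ y) x
      = ∑ᶠ z ∈ σ^[m] ⁻¹' {x}, ∑ᶠ y ∈ σ^[n] ⁻¹' {z}, F y := finsum_mem_congr rfl fun z _ => hfiber z
    _ = ∑ᶠ y ∈ (σ^[m] ∘ σ^[n]) ⁻¹' {x}, F y := finsum_mem_preimage_comp _ _ F x hfinite
    _ = _ := by rw [← iterate_add, add_comm]; rfl

/-- `⟨ξ₂, ⟨ξ₁,η₁⟩_n · η₂⟩_m = ⟨ξ, η⟩_{n+m}` where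
`ξ(x) = ξ₁(x)·ξ₂(σⁿ(x))` and `η(x) = η₁(x)·η₂(σⁿ(x))`. -/
theorem stmt1 {X : Type*} [TopologicalSpace X] [LocallyCompactSpace X] [T2Space X]
    {U : Set X} (hU : IsOpen U) {σ : X → X} (hσ : IsLocalHomeomorphOn σ U)
    (n m : ℕ) (ξ₁ η₁ ξ₂ η₂ : X → ℂ)
    (h₁c : Continuous ξ₁) (h₁s : HasCompactSupport ξ₁) (h₁U : tsupport ξ₁ ⊆ Un σ U n)
    (h₂c : Continuous η₁) (h₂s : HasCompactSupport η₁) (h₂U : tsupport η₁ ⊆ Un σ U n)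
    (h₃c : Continuous ξ₂) (h₃s : HasCompactSupport ξ₂) (h₃U : tsupport ξ₂ ⊆ Un σ U m)
    (h₄c : Continuous η₂) (h₄s : HasCompactSupport η₂) (h₄U : tsupport η₂ ⊆ Un σ U m) :
    ipn σ m ξ₂ (fun y => ipn σ n ξ₁ η₁ y * η₂ y) =
      ipn σ (n + m) (fun x => ξ₁ x * ξ₂ (σ^[n] x)) (fun x => η₁ x * η₂ (σ^[n] x)) :=
  stmt1_general hσ n m ξ₁ η₁ ξ₂ η₂ h₁s h₁U h₃s h₃U
end

section
/- Let σ : U → X be a local homeomorphism on an open subset U of a locally compact Hausdorff space X, and let U_n be the domain of σⁿ. For n, m ∈ ℕ and any ξ ∈ C_c(U_{n+m}), there exist ξ₁ ∈ C_c(U_n) and ξ₂ ∈ C_c(U_m) such that ξ(x) = ξ₁(x)·ξ₂(σⁿ(x)) for all x ∈ U_{n+m}. -/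
lemma un_zero {X : Type*} (σ : X → X) (U : Set X) : Un σ U 0 = Set.univ := by
  ext x; simp [Un]

lemma un_succ {X : Type*} (σ : X → X) (U : Set X) (k : ℕ) :
    Un σ U (k + 1) = U ∩ σ ⁻¹' (Un σ U k) := by
  ext x
  constructor
  · intro h
    refine ⟨h 0 (Nat.succ_pos _), fun j hj => ?_⟩
    simpa [Function.iterate_succ_apply] using h (j + 1) (by omega)
  · rintro ⟨hx, hσx⟩ j hj
    cases j with
    | zero => exact hx
    | succ i => simpa [Function.iterate_succ_apply] using hσx i (by omega)

lemma un_antitone {X : Type*} (σ : X → X) (U : Set X) {n m : ℕ} (h : n ≤ m) :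
    Un σ U m ⊆ Un σ U n := fun _ hx j hj => hx j (lt_of_lt_of_le hj h)

lemma isOpen_un {X : Type*} [TopologicalSpace X] {U : Set X} (hU : IsOpen U)
    {σ : X → X} (hσ : ContinuousOn σ U) (n : ℕ) : IsOpen (Un σ U n) := by
  induction n with
  | zero => rw [un_zero]; exact isOpen_univ
  | succ k ih => rw [un_succ]; exact hσ.isOpen_inter_preimage hU ih

lemma continuousOn_iterate {X : Type*} [TopologicalSpace X] {U : Set X}
    {σ : X → X} (hσ : ContinuousOn σ U) (n : ℕ) :
    ContinuousOn (σ^[n]) (Un σ U n) := by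
  induction n with
  | zero => simpa using continuousOn_id
  | succ k ih =>
    rw [Function.iterate_succ]
    refine ContinuousOn.comp ih (hσ.mono ?_) ?_
    · rw [un_succ]; exact Set.inter_subset_left
    · intro x hx
      rw [un_succ] at hx; exact hx.2

/-- every `ξ ∈ C_c(U_{n+m})` factors as
`ξ(x) = ξ₁(x) · ξ₂(σⁿ(x))` with `ξ₁ ∈ C_c(U_n)` and `ξ₂ ∈ C_c(U_m)`. -/
theorem stmt2 {X : Type*} [TopologicalSpace X] [LocallyCompactSpace X] [T2Space X]
    {U : Set X} (hU : IsOpen U) {σ : X → X} (hσ : IsLocalHomeomorphOn σ U)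
    (n m : ℕ) (ξ : X → ℂ) (hc : Continuous ξ) (hs : HasCompactSupport ξ)
    (hsupp : tsupport ξ ⊆ Un σ U (n + m)) :
    ∃ ξ₁ ξ₂ : X → ℂ,
      Continuous ξ₁ ∧ HasCompactSupport ξ₁ ∧ tsupport ξ₁ ⊆ Un σ U n ∧
      Continuous ξ₂ ∧ HasCompactSupport ξ₂ ∧ tsupport ξ₂ ⊆ Un σ U m ∧
      ∀ x ∈ Un σ U (n + m), ξ x = ξ₁ x * ξ₂ (σ^[n] x) := by
  have hcont : ContinuousOn σ U := hσ.continuousOn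
  -- the image K = σⁿ''(tsupport ξ) is compact and contained in U_m
  have hsub_n : tsupport ξ ⊆ Un σ U n :=
    hsupp.trans (un_antitone σ U (Nat.le_add_right n m))
  have hK : IsCompact (σ^[n] '' tsupport ξ) :=
    hs.image_of_continuousOn ((continuousOn_iterate hcont n).mono hsub_n)
  have hKsub : σ^[n] '' tsupport ξ ⊆ Un σ U m := by
    rintro _ ⟨x, hx, rfl⟩ j hj
    have := hsupp hx (j + n) (by omega)
    rwa [Function.iterate_add_apply] at this
  -- squeeze a compact closed set k between K and U_m
  obtain ⟨k, k_comp, k_closed, hKk, hkU⟩ :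
      ∃ k, IsCompact k ∧ IsClosed k ∧ σ^[n] '' tsupport ξ ⊆ interior k ∧ k ⊆ Un σ U m :=
    exists_compact_closed_between hK (isOpen_un hU hcont m) hKsub
  -- Urysohn bump: 1 on K, 0 outside interior k
  obtain ⟨f, hf1, hf0, hfc, _⟩ :=
    exists_continuous_one_zero_of_isCompact hK isOpen_interior.isClosed_compl
      (Set.disjoint_compl_right_iff_subset.mpr hKk)
  refine ⟨ξ, fun x => (f x : ℂ), hc, hs, hsub_n,
    Complex.continuous_ofReal.comp f.continuous, ?_, ?_, ?_⟩
  · exact hfc.comp_left (g := (Complex.ofReal)) rfl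
  · have hclk : closure k ⊆ Un σ U m := by rw [k_closed.closure_eq]; exact hkU
    refine (closure_mono (t := k) ?_).trans hclk
    intro x hx
    simp only [Function.mem_support, ne_eq, Complex.ofReal_eq_zero] at hx
    by_contra hxk
    exact hx (hf0 fun hmem => hxk (interior_subset hmem))
  · intro x hx
    by_cases hxs : x ∈ tsupport ξ
    · show ξ x = ξ x * (f (σ^[n] x) : ℂ)
      rw [hf1 ⟨x, hxs, rfl⟩]; simp
    · show ξ x = ξ x * (f (σ^[n] x) : ℂ)
      rw [image_eq_zero_of_notMem_tsupport hxs]; ring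
end

section
/- Let σ : U → X be a local homeomorphism on an open subset U of a locally compact Hausdorff space X. For any n ∈ ℕ and ξ ∈ C_c(U_n), there exist ξ₁, ..., ξ_n ∈ C_c(U) such that ξ(x) = ξ₁(x)·ξ₂(σ(x))···ξ_n(σ^{n-1}(x)) for all x ∈ U_n. -/
/-- every `ξ ∈ C_c(U_n)` factors as
`ξ(x) = ξ₁(x) · ξ₂(σ(x)) ⋯ ξ_n(σ^{n-1}(x))` with `ξ₁, …, ξ_n ∈ C_c(U)`. -/
theorem stmt3 {X : Type*} [TopologicalSpace X] [LocallyCompactSpace X] [T2Space X]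
    {U : Set X} (hU : IsOpen U) {σ : X → X} (hσ : IsLocalHomeomorphOn σ U)
    (n : ℕ) (hn : 1 ≤ n) (ξ : X → ℂ) (hc : Continuous ξ) (hs : HasCompactSupport ξ)
    (hsupp : tsupport ξ ⊆ Un σ U n) :
    ∃ ξs : Fin n → (X → ℂ),
      (∀ i, Continuous (ξs i) ∧ HasCompactSupport (ξs i) ∧ tsupport (ξs i) ⊆ U) ∧
      ∀ x ∈ Un σ U n, ξ x = ∏ i : Fin n, ξs i (σ^[(i : ℕ)] x) := by
  have hσc : ContinuousOn σ U := hσ.continuousOn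
  have hcont : ∀ i : ℕ, i < n → ContinuousOn (σ^[i]) (Un σ U n) := by
    intro i hi
    induction i with
    | zero => simpa using continuousOn_id
    | succ k ih =>
      rw [Function.iterate_succ']
      exact hσc.comp (ih (by omega)) (fun x hx => hx k (by omega))
  set K := tsupport ξ with hK
  -- for each i, get a bump function
  have hbump : ∀ i : Fin n, ∃ f : X → ℝ, Continuous f ∧ HasCompactSupport f ∧
      tsupport f ⊆ U ∧ Set.EqOn f 1 (σ^[(i : ℕ)] '' K) := by
    intro i
    have hSc : IsCompact (σ^[(i : ℕ)] '' K) :=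
      hs.image_of_continuousOn ((hcont i i.2).mono hsupp)
    have hSU : σ^[(i : ℕ)] '' K ⊆ U := by
      rintro _ ⟨x, hx, rfl⟩
      exact hsupp hx (i : ℕ) i.2
    obtain ⟨L, hLc, hSL, hLU⟩ := exists_compact_between hSc hU hSU
    obtain ⟨f, hf1, hf0, hfs, -⟩ :=
      exists_continuous_one_zero_of_isCompact hSc isOpen_interior.isClosed_compl
        (Set.disjoint_compl_right_iff_subset.mpr hSL)
    refine ⟨f, f.continuous, hfs, ?_, hf1⟩
    have : Function.support f ⊆ interior L := by
      intro x hx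
      by_contra h
      exact hx (hf0 h)
    exact (closure_minimal (this.trans interior_subset) hLc.isClosed).trans hLU
  choose f hfc hfcs hfU hf1 using hbump
  classical
  refine ⟨fun i => if i = ⟨0, hn⟩ then ξ else fun x => (f i x : ℂ), ?_, ?_⟩
  · intro i
    by_cases h : i = ⟨0, hn⟩
    · simp only [h, if_pos]
      exact ⟨hc, hs, fun x hx => hsupp hx 0 hn⟩
    · simp only [h, if_neg, if_false]
      have hsupp_eq : Function.support (fun x => (f i x : ℂ)) = Function.support (f i) := by
        ext x; simp [Function.mem_support, Complex.ofReal_eq_zero]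
      have hts : tsupport (fun x => (f i x : ℂ)) = tsupport (f i) := by
        rw [tsupport, tsupport, hsupp_eq]
      exact ⟨Complex.continuous_ofReal.comp (hfc i), by rw [HasCompactSupport, hts]; exact hfcs i,
        hts ▸ hfU i⟩
  · intro x hx
    by_cases hxK : x ∈ K
    · have : ∀ i : Fin n, (if i = ⟨0, hn⟩ then ξ else fun x => (f i x : ℂ)) (σ^[(i : ℕ)] x)
          = if i = ⟨0, hn⟩ then ξ x else 1 := by
        intro i
        by_cases h : i = ⟨0, hn⟩
        · simp [h]
        · simp only [h, if_neg, if_false]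
          rw [hf1 i ⟨x, hxK, rfl⟩]
          simp
      rw [Finset.prod_congr rfl (fun i _ => this i)]
      rw [Finset.prod_ite_eq' Finset.univ (⟨0, hn⟩ : Fin n) (fun _ => ξ x)]
      simp
    · have hx0 : ξ x = 0 := image_eq_zero_of_notMem_tsupport hxK
      rw [hx0]
      symm
      apply Finset.prod_eq_zero (Finset.mem_univ (⟨0, hn⟩ : Fin n))
      simp [hx0]
end

section
/- Let σ : U → X be a local homeomorphism on an open subset U of a locally compact Hausdorff space X. Call a subset X' ⊆ X σ-invariant if for all x ∈ U, x ∈ X' if and only if σ(x) ∈ X'. Then for every x ∈ X, the closure of Orb(x) is a closed σ-invariant subset of X. -/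
open Topology

/-- The two-sided orbit `Orb(x) = {y : σⁿ(y) = σᵐ(x) for some n, m}`. -/
def Orb {X : Type*} (σ : X → X) (U : Set X) (x : X) : Set X :=
  {y | ∃ n m, y ∈ Un σ U n ∧ x ∈ Un σ U m ∧ σ^[n] y = σ^[m] x}

/-- A subset `A ⊆ X` is `σ`-invariant when for all `x ∈ U`, `x ∈ A ↔ σ(x) ∈ A`. -/
def SigmaInvariant {X : Type*} (σ : X → X) (U : Set X) (A : Set X) : Prop :=
  ∀ x ∈ U, (x ∈ A ↔ σ x ∈ A)

lemma orb_fwd {X : Type*} {σ : X → X} {U : Set X} {x y : X} (hy : y ∈ U)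
    (h : y ∈ Orb σ U x) : σ y ∈ Orb σ U x := by
  obtain ⟨n, m, hyn, hxm, heq⟩ := h
  cases n with
  | zero =>
    refine ⟨0, m + 1, fun j hj => absurd hj (Nat.not_lt_zero j), fun j hj => ?_, ?_⟩
    · rcases Nat.lt_succ_iff_lt_or_eq.mp hj with hj | rfl
      · exact hxm j hj
      · simpa [← heq] using hy
    · simp only [Function.iterate_zero, id_eq, Function.iterate_succ_apply']
      exact congrArg σ heq
  | succ k =>
    refine ⟨k, m, fun j hj => ?_, hxm, ?_⟩
    · rw [← Function.iterate_succ_apply]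
      exact hyn (j + 1) (Nat.succ_lt_succ hj)
    · rw [← Function.iterate_succ_apply]
      exact heq

lemma orb_bwd {X : Type*} {σ : X → X} {U : Set X} {x y : X} (hy : y ∈ U)
    (h : σ y ∈ Orb σ U x) : y ∈ Orb σ U x := by
  obtain ⟨n, m, hyn, hxm, heq⟩ := h
  refine ⟨n + 1, m, fun j hj => ?_, hxm, ?_⟩
  · cases j with
    | zero => simpa using hy
    | succ k =>
      rw [Function.iterate_succ_apply]
      exact hyn k (Nat.lt_of_succ_lt_succ hj)
  · rw [Function.iterate_succ_apply]
    exact heq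

/-- the closure of an orbit is a closed `σ`-invariant set. -/
theorem stmt6 {X : Type*} [TopologicalSpace X] [LocallyCompactSpace X] [T2Space X]
    {U : Set X} (hU : IsOpen U) {σ : X → X} (hσ : IsLocalHomeomorphOn σ U)
    (x : X) :
    IsClosed (closure (Orb σ U x)) ∧ SigmaInvariant σ U (closure (Orb σ U x)) := by
  refine ⟨isClosed_closure, fun y hy => ?_⟩
  have hnU : U ∈ 𝓝 y := hU.mem_nhds hy
  constructor
  · intro hyc
    rw [mem_closure_iff_nhds] at hyc ⊢
    intro T hT
    have hpre : σ ⁻¹' T ∈ 𝓝 y := (hσ.continuousAt hy) hT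
    obtain ⟨z, ⟨hz1, hz2⟩, hz3⟩ := hyc _ (Filter.inter_mem hpre hnU)
    exact ⟨σ z, hz1, orb_fwd hz2 hz3⟩
  · intro hyc
    rw [mem_closure_iff_nhds] at hyc ⊢
    intro N hN
    have hN' : N ∩ U ∈ 𝓝 y := Filter.inter_mem hN hnU
    have himg : σ '' (N ∩ U) ∈ 𝓝 (σ y) := by
      rw [← hσ.map_nhds_eq hy]
      exact Filter.image_mem_map hN'
    obtain ⟨p, hp1, hp2⟩ := hyc _ himg
    obtain ⟨z, ⟨hz1, hz2⟩, rfl⟩ := hp1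
    exact ⟨z, hz1, orb_bwd hz2 hp2⟩
end

section
/- Let σ : U → X be a local homeomorphism on an open subset U of a locally compact Hausdorff space X. Call a closed σ-invariant set X' irreducible if X' is nonempty and whenever X' = X₁ ∪ X₂ with X₁, X₂ closed σ-invariant, one has X' = X₁ or X' = X₂. Then for every x ∈ X, the closure of Orb(x) is an irreducible closed σ-invariant set. -/
/-- A closed `σ`-invariant set `A` is irreducible if it is nonempty and
whenever `A = A₁ ∪ A₂` with `A₁, A₂` closed `σ`-invariant, `A = A₁` or `A = A₂`. -/
def IrreducibleInv {X : Type*} [TopologicalSpace X] (σ : X → X) (U : Set X)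
    (A : Set X) : Prop :=
  A.Nonempty ∧ ∀ A₁ A₂ : Set X, IsClosed A₁ → SigmaInvariant σ U A₁ →
    IsClosed A₂ → SigmaInvariant σ U A₂ → A = A₁ ∪ A₂ → A = A₁ ∨ A = A₂

lemma inv_iter {X : Type*} {σ : X → X} {U : Set X} {A : Set X}
    (hA : SigmaInvariant σ U A) :
    ∀ m, ∀ y ∈ Un σ U m, (y ∈ A ↔ σ^[m] y ∈ A) := by
  intro m
  induction m with
  | zero => intro y _; rfl
  | succ k ih =>
    intro y hy
    have hyU : y ∈ U := hy 0 (Nat.succ_pos k)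
    have hσy : σ y ∈ Un σ U k := by
      intro j hj
      have := hy (j + 1) (Nat.succ_lt_succ hj)
      simpa [Function.iterate_succ_apply] using this
    rw [hA y hyU, ih (σ y) hσy, Function.iterate_succ_apply]

lemma orb_inv {X : Type*} (σ : X → X) (U : Set X) (x : X) :
    SigmaInvariant σ U (Orb σ U x) := by
  intro y hyU
  constructor
  · rintro ⟨n, m, hyn, hxm, heq⟩
    cases n with
    | zero =>
      refine ⟨0, m + 1, ?_, ?_, ?_⟩
      · intro j hj; omega
      · intro j hj
        rcases Nat.lt_succ_iff_lt_or_eq.mp hj with h | h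
        · exact hxm j h
        · subst h; rw [← heq]; simpa using hyU
      · simp only [Function.iterate_zero_apply] at heq ⊢
        rw [Function.iterate_succ_apply', ← heq]
    | succ k =>
      refine ⟨k, m, ?_, hxm, ?_⟩
      · intro j hj
        have := hyn (j + 1) (Nat.succ_lt_succ hj)
        simpa [Function.iterate_succ_apply] using this
      · rw [← heq, Function.iterate_succ_apply]
  · rintro ⟨n, m, hσn, hxm, heq⟩
    refine ⟨n + 1, m, ?_, hxm, ?_⟩
    · intro j hj
      cases j with
      | zero => simpa using hyU
      | succ k =>
        have := hσn k (Nat.lt_of_succ_lt_succ hj)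
        simpa [Function.iterate_succ_apply] using this
    · rw [Function.iterate_succ_apply, heq]

/-- the closure of any orbit is an irreducible closed
`σ`-invariant set. -/
theorem stmt7 {X : Type*} [TopologicalSpace X] [LocallyCompactSpace X] [T2Space X]
    {U : Set X} (hU : IsOpen U) {σ : X → X} (hσ : IsLocalHomeomorphOn σ U)
    (x : X) :
    IsClosed (closure (Orb σ U x)) ∧ SigmaInvariant σ U (closure (Orb σ U x)) ∧
      IrreducibleInv σ U (closure (Orb σ U x)) := by
  have horb := orb_inv σ U x
  have hxorb : x ∈ Orb σ U x := ⟨0, 0, by intro j hj; omega, by intro j hj; omega, rfl⟩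
  have hclosinv : SigmaInvariant σ U (closure (Orb σ U x)) := by
    intro y hyU
    obtain ⟨e, hye, hfe⟩ := hσ y hyU
    constructor
    · intro hy
      rw [mem_closure_iff]
      intro W hW hσyW
      have hc : ContinuousAt σ y := by
        rw [hfe]; exact e.continuousAt hye
      have : σ ⁻¹' W ∈ nhds y := hc (hW.mem_nhds hσyW)
      obtain ⟨O, hOsub, hOopen, hyO⟩ := mem_nhds_iff.mp this
      obtain ⟨z, hzO, hzorb⟩ := mem_closure_iff.mp hy (O ∩ U) (hOopen.inter hU)
        ⟨hyO, hyU⟩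
      exact ⟨σ z, hOsub hzO.1, (horb z hzO.2).mp hzorb⟩
    · intro hσy
      rw [mem_closure_iff]
      intro W hW hyW
      have hey : e y ∈ e.target := e.map_source hye
      have hc : ContinuousAt e.symm (e y) := e.continuousAt_symm hey
      have hnb : e.symm ⁻¹' (W ∩ U) ∈ nhds (e y) := by
        apply hc
        rw [e.left_inv hye]
        exact ((hW.inter hU).mem_nhds ⟨hyW, hyU⟩)
      obtain ⟨O, hOsub, hOopen, hyO⟩ := mem_nhds_iff.mp hnb
      have hσyO : σ y ∈ O ∩ e.target := by
        rw [hfe]; exact ⟨hyO, hey⟩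
      obtain ⟨z, hzO, hzorb⟩ := mem_closure_iff.mp hσy (O ∩ e.target)
        (hOopen.inter e.open_target) hσyO
      have hw : e.symm z ∈ W ∩ U := hOsub hzO.1
      have hσw : σ (e.symm z) = z := by rw [hfe]; exact e.right_inv hzO.2
      refine ⟨e.symm z, hw.1, ?_⟩
      exact (horb _ hw.2).mpr (by rw [hσw]; exact hzorb)
  refine ⟨isClosed_closure, hclosinv, ⟨x, subset_closure hxorb⟩, ?_⟩
  intro A₁ A₂ hA₁c hA₁i hA₂c hA₂i hunion
  have key : ∀ A : Set X, IsClosed A → SigmaInvariant σ U A → A ⊆ closure (Orb σ U x) →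
      x ∈ A → closure (Orb σ U x) = A := by
    intro A hAc hAi hAsub hxA
    refine le_antisymm (closure_minimal ?_ hAc) hAsub
    rintro y ⟨n, m, hyn, hxm, heq⟩
    have h1 : σ^[m] x ∈ A := (inv_iter hAi m x hxm).mp hxA
    have h2 : σ^[n] y ∈ A := heq ▸ h1
    exact (inv_iter hAi n y hyn).mpr h2
  have hx12 : x ∈ A₁ ∪ A₂ := hunion ▸ subset_closure hxorb
  cases hx12 with
  | inl h =>
    exact Or.inl (key A₁ hA₁c hA₁i (fun z hz => hunion ▸ Or.inl hz) h)
  | inr h =>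
    exact Or.inr (key A₂ hA₂c hA₂i (fun z hz => hunion ▸ Or.inr hz) h)
end

section
/- Let A be a C*-algebra and I'' an ideal of A. Then the map I ↦ I ∩ I'' is a bijection from the set of prime ideals I of A with I'' ⊄ I onto the set of prime ideals of the C*-algebra I''. Its inverse sends a prime ideal P of I'' to {a ∈ A : ab ∈ P for all b ∈ I''}. -/
/-- `I` is a closed two-sided ideal of the subset `R` (a sub-C*-algebra or ideal)
of the ambient topological non-unital ring `B`. -/
def IsClosedIdealIn {B : Type*} [NonUnitalRing B] [TopologicalSpace B]
    (R : Set B) (I : Set B) : Prop :=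
  I ⊆ R ∧ (0 : B) ∈ I ∧ (∀ a ∈ I, ∀ b ∈ I, a + b ∈ I) ∧ (∀ a ∈ I, -a ∈ I) ∧
    (∀ r ∈ R, ∀ a ∈ I, r * a ∈ I ∧ a * r ∈ I) ∧ IsClosed I

/-- `I` is a prime (closed two-sided) ideal of `R ⊆ B`: `I ≠ R` and whenever
`I₁ ∩ I₂ ⊆ I` for closed ideals `I₁, I₂` of `R`, one has `I₁ ⊆ I` or `I₂ ⊆ I`. -/
def IsPrimeIdealIn {B : Type*} [NonUnitalRing B] [TopologicalSpace B]
    (R : Set B) (I : Set B) : Prop :=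
  IsClosedIdealIn R I ∧ I ≠ R ∧
    ∀ I₁ I₂ : Set B, IsClosedIdealIn R I₁ → IsClosedIdealIn R I₂ →
      I₁ ∩ I₂ ⊆ I → I₁ ⊆ I ∨ I₂ ⊆ I

/-!
With `fₙ t = min ((n+1)|t|) 1`, every element of a C⋆-algebra satisfies `a = lim a fₙ(a⋆a)`,
since `‖a - a fₙ(a⋆a)‖² = ‖(a⋆a)(1 - fₙ(a⋆a))²‖ ≤ 1/(n+1)`, and `fₙ(a⋆a)` lies in every closed
real subalgebra containing `a⋆a`. This local approximate unit shows that closed ideals are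
self-adjoint, that `cc⋆ ∈ I` forces `c ∈ I`, and that a closed ideal `J` of a closed ideal `S` is
an ideal of `A` (`ra = lim (ra) fₙ(a⋆a)` with `ra ∈ S` and `fₙ(a⋆a) ∈ J`). The inverse of
`I ↦ I ∩ S` is then the colon ideal `(P : S) = {a | aS ⊆ P}`: one has `(P : S) ∩ S = P`, and a
prime `I ⊉ S` contains `(I ∩ S : S)` because it contains its intersection with `S`.
-/

open Filter Topology

noncomputable def approxUnitFun (n : ℕ) (t : ℝ) : ℝ := min ((n + 1 : ℝ) * |t|) 1

@[fun_prop]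
lemma continuous_approxUnitFun (n : ℕ) : Continuous (approxUnitFun n) := by
  unfold approxUnitFun; fun_prop

@[simp]
lemma approxUnitFun_zero (n : ℕ) : approxUnitFun n 0 = 0 := by simp [approxUnitFun]

lemma abs_mul_one_sub_approxUnitFun_sq_le (n : ℕ) (t : ℝ) :
    |t * (1 - approxUnitFun n t) ^ 2| ≤ 1 / ((n : ℝ) + 1) := by
  rcases le_or_gt 1 ((n + 1 : ℝ) * |t|) with h | h
  · simp [approxUnitFun, min_eq_right h, Nat.cast_add_one_pos n |>.le]
  · have ht : |t| ≤ 1 / ((n : ℝ) + 1) := by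
      rw [le_div_iff₀ (by positivity)]; linarith
    have hf : approxUnitFun n t ∈ Set.Icc (0 : ℝ) 1 :=
      ⟨le_min (by positivity) zero_le_one, min_le_right _ _⟩
    have hsq : (1 - approxUnitFun n t) ^ 2 ≤ 1 := by nlinarith [hf.1, hf.2]
    calc |t * (1 - approxUnitFun n t) ^ 2| = |t| * (1 - approxUnitFun n t) ^ 2 := by
          rw [abs_mul, abs_of_nonneg (sq_nonneg (1 - approxUnitFun n t))]
      _ ≤ |t| := mul_le_of_le_one_right (abs_nonneg t) hsq
      _ ≤ 1 / ((n : ℝ) + 1) := ht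

section CStarAlgebra

variable {A : Type*} [NonUnitalCStarAlgebra A]

lemma norm_mul_cfcₙ_approxUnitFun_sub_le (a : A) (n : ℕ) :
    ‖a * cfcₙ (approxUnitFun n) (star a * a) - a‖ ≤ √(1 / ((n : ℝ) + 1)) := by
  set b := star a * a
  set u := cfcₙ (approxUnitFun n) b
  have hu : IsSelfAdjoint u := cfcₙ_predicate _ b
  have hstar : star (a * u - a) * (a * u - a) = u * b * u - u * b - b * u + b := by
    rw [star_sub, star_mul, hu.star_eq]
    simp only [b]
    noncomm_ring
  have hcfc :
      u * b * u - u * b - b * u + b = cfcₙ (fun t ↦ t * (1 - approxUnitFun n t) ^ 2) b := by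
    have : (fun t ↦ t * (1 - approxUnitFun n t) ^ 2) = fun t ↦
        approxUnitFun n t * t * approxUnitFun n t - approxUnitFun n t * t
          - t * approxUnitFun n t + t := by
      ext t; ring
    rw [this, cfcₙ_add .., cfcₙ_sub .., cfcₙ_sub .., cfcₙ_mul .., cfcₙ_mul .., cfcₙ_mul ..,
      cfcₙ_id' ℝ b]
  have hsq : ‖a * u - a‖ * ‖a * u - a‖ ≤ 1 / ((n : ℝ) + 1) := by
    rw [← CStarRing.norm_star_mul_self, hstar, hcfc]
    exact norm_cfcₙ_le fun t _ ↦ abs_mul_one_sub_approxUnitFun_sq_le n t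
  exact Real.le_sqrt_of_sq_le (by rwa [sq])

lemma tendsto_mul_cfcₙ_approxUnitFun (a : A) :
    Tendsto (fun n : ℕ ↦ a * cfcₙ (approxUnitFun n) (star a * a)) atTop (𝓝 a) := by
  rw [tendsto_iff_norm_sub_tendsto_zero]
  have hlim : Tendsto (fun n : ℕ ↦ √(1 / ((n : ℝ) + 1))) atTop (𝓝 0) :=
    (Real.continuous_sqrt.tendsto' 0 0 Real.sqrt_zero).comp
      tendsto_one_div_add_atTop_nhds_zero_nat
  exact squeeze_zero (fun _ ↦ norm_nonneg _) (norm_mul_cfcₙ_approxUnitFun_sub_le a) hlim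

lemma tendsto_cfcₙ_approxUnitFun_mul (a : A) :
    Tendsto (fun n : ℕ ↦ cfcₙ (approxUnitFun n) (a * star a) * a) atTop (𝓝 a) := by
  have h := (continuous_star.tendsto _).comp (tendsto_mul_cfcₙ_approxUnitFun (star a))
  simp only [star_star] at h
  refine h.congr fun n ↦ ?_
  simp [(cfcₙ_predicate (approxUnitFun n) (a * star a) : IsSelfAdjoint _).star_eq]

lemma NonUnitalSubalgebra.cfcₙ_mem_of_isClosed {S : NonUnitalSubalgebra ℝ A}
    (hS : IsClosed (S : Set A)) {b : A} (hb : IsSelfAdjoint b) (hbS : b ∈ S) (f : ℝ → ℝ) :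
    cfcₙ f b ∈ S := by
  have hadjoin : (NonUnitalStarAlgebra.adjoin ℝ {b} : Set A) ⊆ S := by
    rw [← NonUnitalStarSubalgebra.coe_toNonUnitalSubalgebra,
      NonUnitalStarAlgebra.adjoin_toNonUnitalSubalgebra, Set.star_singleton, hb.star_eq,
      Set.union_self]
    exact NonUnitalAlgebra.adjoin_le (Set.singleton_subset_iff.mpr hbS)
  exact hS.closure_subset_iff.mpr hadjoin (cfcₙ_mem_elemental f b)

end CStarAlgebra

def Set.colon {B : Type*} [Mul B] (P S : Set B) : Set B := {a | ∀ b ∈ S, a * b ∈ P}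

namespace IsClosedIdealIn

section Algebraic

variable {B : Type*} [NonUnitalRing B] [TopologicalSpace B] {R S I P : Set B} {r a : B}

lemma mul_mem_left (hI : IsClosedIdealIn R I) (hr : r ∈ R) (ha : a ∈ I) : r * a ∈ I :=
  (hI.2.2.2.2.1 r hr a ha).1

lemma mul_mem_right (hI : IsClosedIdealIn R I) (hr : r ∈ R) (ha : a ∈ I) : a * r ∈ I :=
  (hI.2.2.2.2.1 r hr a ha).2

lemma isClosed (hI : IsClosedIdealIn R I) : IsClosed I := hI.2.2.2.2.2

lemma inter (hI : IsClosedIdealIn R I) (hS : IsClosedIdealIn R S) :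
    IsClosedIdealIn S (I ∩ S) := by
  refine ⟨Set.inter_subset_right, ⟨hI.2.1, hS.2.1⟩, ?_, ?_, ?_, hI.isClosed.inter hS.isClosed⟩
  · rintro a ⟨haI, haS⟩ b ⟨hbI, hbS⟩
    exact ⟨hI.2.2.1 a haI b hbI, hS.2.2.1 a haS b hbS⟩
  · rintro a ⟨haI, haS⟩
    exact ⟨hI.2.2.2.1 a haI, hS.2.2.2.1 a haS⟩
  · rintro r hr a ⟨haI, haS⟩
    exact ⟨⟨hI.mul_mem_left (hS.1 hr) haI, hS.mul_mem_left (hS.1 hr) haS⟩,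
      ⟨hI.mul_mem_right (hS.1 hr) haI, hS.mul_mem_right (hS.1 hr) haS⟩⟩

lemma colon [ContinuousMul B] (hS : IsClosedIdealIn Set.univ S)
    (hP : IsClosedIdealIn Set.univ P) : IsClosedIdealIn Set.univ (Set.colon P S) := by
  refine ⟨Set.subset_univ _, fun b _ ↦ by simpa using hP.2.1, ?_, ?_, ?_, ?_⟩
  · intro a ha c hc b hb
    simpa [add_mul] using hP.2.2.1 _ (ha b hb) _ (hc b hb)
  · intro a ha b hb
    simpa [neg_mul] using hP.2.2.2.1 _ (ha b hb)
  · refine fun r _ a ha ↦ ⟨fun b hb ↦ ?_, fun b hb ↦ ?_⟩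
    · rw [mul_assoc]; exact hP.mul_mem_left trivial (ha b hb)
    · rw [mul_assoc]; exact ha _ (hS.mul_mem_left trivial hb)
  · have : Set.colon P S = ⋂ b ∈ S, (· * b) ⁻¹' P := by ext; simp [Set.colon]
    rw [this]
    exact isClosed_biInter fun b _ ↦ hP.isClosed.preimage (continuous_mul_const b)

end Algebraic

section CStarAlgebra

variable {A : Type*} [NonUnitalCStarAlgebra A] {R S I J P : Set A}

def toNonUnitalSubalgebra (hI : IsClosedIdealIn R I) (hsmul : ∀ (c : ℝ), ∀ x ∈ I, c • x ∈ I) :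
    NonUnitalSubalgebra ℝ A where
  carrier := I
  add_mem' ha hb := hI.2.2.1 _ ha _ hb
  zero_mem' := hI.2.1
  mul_mem' hx hy := hI.mul_mem_left (hI.1 hx) hy
  smul_mem' c _ hx := hsmul c _ hx

lemma cfcₙ_mem (hI : IsClosedIdealIn R I) (hsmul : ∀ (c : ℝ), ∀ x ∈ I, c • x ∈ I) {b : A}
    (hb : IsSelfAdjoint b) (hbI : b ∈ I) (f : ℝ → ℝ) : cfcₙ f b ∈ I :=
  (hI.toNonUnitalSubalgebra hsmul).cfcₙ_mem_of_isClosed hI.isClosed hb hbI f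

-- `IsClosedIdealIn` only asks for an additive subgroup; scalars come from
-- `c • x = lim (c • fₙ(xx⋆)) x`.
lemma smul_mem_of_forall_smul_cfcₙ_mem (hI : IsClosedIdealIn R I) (c : ℝ) {x : A} (hx : x ∈ I)
    (hR : ∀ n, c • cfcₙ (approxUnitFun n) (x * star x) ∈ R) : c • x ∈ I := by
  refine hI.isClosed.mem_of_tendsto ((tendsto_cfcₙ_approxUnitFun_mul x).const_smul c)
    (.of_forall fun n ↦ ?_)
  rw [← smul_mul_assoc]
  exact hI.mul_mem_left (hR n) hx

lemma smul_mem (hI : IsClosedIdealIn Set.univ I) (c : ℝ) {x : A} (hx : x ∈ I) : c • x ∈ I :=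
  hI.smul_mem_of_forall_smul_cfcₙ_mem c hx fun _ ↦ trivial

lemma cfcₙ_mem_of_univ (hI : IsClosedIdealIn Set.univ I) {b : A} (hb : IsSelfAdjoint b)
    (hbI : b ∈ I) (f : ℝ → ℝ) : cfcₙ f b ∈ I :=
  hI.cfcₙ_mem (fun c _ ↦ hI.smul_mem c) hb hbI f

lemma mem_of_mul_star_self_mem (hI : IsClosedIdealIn Set.univ I) {c : A}
    (h : c * star c ∈ I) : c ∈ I :=
  hI.isClosed.mem_of_tendsto (tendsto_cfcₙ_approxUnitFun_mul c) <| .of_forall fun _ ↦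
    hI.mul_mem_right trivial (hI.cfcₙ_mem_of_univ (.mul_star_self c) h _)

lemma star_mem (hI : IsClosedIdealIn Set.univ I) {x : A} (hx : x ∈ I) : star x ∈ I :=
  hI.mem_of_mul_star_self_mem <| by simpa using hI.mul_mem_left trivial hx

lemma smul_mem_of_subideal (hS : IsClosedIdealIn Set.univ S) (hJ : IsClosedIdealIn S J) (c : ℝ)
    {x : A} (hx : x ∈ J) : c • x ∈ J :=
  hJ.smul_mem_of_forall_smul_cfcₙ_mem c hx fun _ ↦ hS.smul_mem c <|
    hS.cfcₙ_mem_of_univ (.mul_star_self x) (hS.mul_mem_right trivial (hJ.1 hx)) _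

lemma of_subideal (hS : IsClosedIdealIn Set.univ S) (hJ : IsClosedIdealIn S J) :
    IsClosedIdealIn Set.univ J := by
  have hsmul : ∀ (c : ℝ), ∀ x ∈ J, c • x ∈ J := fun c _ ↦ hS.smul_mem_of_subideal hJ c
  refine ⟨Set.subset_univ J, hJ.2.1, hJ.2.2.1, hJ.2.2.2.1, fun r _ a ha ↦ ⟨?_, ?_⟩, hJ.isClosed⟩
  · have hu : ∀ n, cfcₙ (approxUnitFun n) (star a * a) ∈ J := fun _ ↦
      hJ.cfcₙ_mem hsmul (.star_mul_self a) (hJ.mul_mem_left (hS.star_mem (hJ.1 ha)) ha) _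
    refine hJ.isClosed.mem_of_tendsto ((tendsto_mul_cfcₙ_approxUnitFun a).const_mul r)
      (.of_forall fun n ↦ ?_)
    rw [← mul_assoc]
    exact hJ.mul_mem_left (hS.mul_mem_left trivial (hJ.1 ha)) (hu n)
  · have hu : ∀ n, cfcₙ (approxUnitFun n) (a * star a) ∈ J := fun _ ↦
      hJ.cfcₙ_mem hsmul (.mul_star_self a) (hJ.mul_mem_right (hS.star_mem (hJ.1 ha)) ha) _
    refine hJ.isClosed.mem_of_tendsto ((tendsto_cfcₙ_approxUnitFun_mul a).mul_const r)
      (.of_forall fun n ↦ ?_)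
    rw [mul_assoc]
    exact hJ.mul_mem_right (hS.mul_mem_right trivial (hJ.1 ha)) (hu n)

lemma colon_inter_eq (hS : IsClosedIdealIn Set.univ S) (hP : IsClosedIdealIn S P) :
    Set.colon P S ∩ S = P := by
  refine Set.Subset.antisymm (fun c ⟨hcP, hcS⟩ ↦ ?_) fun p hp ↦
    ⟨fun b hb ↦ hP.mul_mem_right hb hp, hP.1 hp⟩
  exact (hS.of_subideal hP).mem_of_mul_star_self_mem (hcP _ (hS.star_mem hcS))

end CStarAlgebra

end IsClosedIdealIn

namespace IsPrimeIdealIn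

variable {A : Type*} [NonUnitalCStarAlgebra A] {S I P : Set A}

lemma inter (hS : IsClosedIdealIn Set.univ S) (hI : IsPrimeIdealIn Set.univ I) (hSI : ¬ S ⊆ I) :
    IsPrimeIdealIn S (I ∩ S) := by
  refine ⟨hI.1.inter hS, fun h ↦ hSI (h ▸ Set.inter_subset_left), fun J₁ J₂ hJ₁ hJ₂ hJ ↦ ?_⟩
  refine (hI.2.2 J₁ J₂ (hS.of_subideal hJ₁) (hS.of_subideal hJ₂)
    (hJ.trans Set.inter_subset_left)).imp (fun h ↦ ?_) fun h ↦ ?_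
  exacts [Set.subset_inter h hJ₁.1, Set.subset_inter h hJ₂.1]

lemma colon (hS : IsClosedIdealIn Set.univ S) (hP : IsPrimeIdealIn S P) :
    IsPrimeIdealIn Set.univ (Set.colon P S) ∧ ¬ S ⊆ Set.colon P S := by
  have hPS := hS.colon_inter_eq hP.1
  have hSP : ¬ S ⊆ Set.colon P S := fun h ↦ hP.2.1 (by rw [← hPS, Set.inter_eq_right.mpr h])
  refine ⟨⟨hS.colon (hS.of_subideal hP.1), fun h ↦ hSP (h ▸ Set.subset_univ S),
    fun I₁ I₂ hI₁ hI₂ hI ↦ ?_⟩, hSP⟩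
  have hI' : (I₁ ∩ S) ∩ (I₂ ∩ S) ⊆ P := fun x ⟨⟨hx₁, hxS⟩, hx₂, _⟩ ↦
    hPS ▸ ⟨hI ⟨hx₁, hx₂⟩, hxS⟩
  refine (hP.2.2 _ _ (hI₁.inter hS) (hI₂.inter hS) hI').imp (fun h a ha b hb ↦ h ?_)
    fun h a ha b hb ↦ h ?_
  exacts [⟨hI₁.mul_mem_right trivial ha, hS.mul_mem_left trivial hb⟩,
    ⟨hI₂.mul_mem_right trivial ha, hS.mul_mem_left trivial hb⟩]

lemma colon_inter_eq_self (hS : IsClosedIdealIn Set.univ S) (hI : IsPrimeIdealIn Set.univ I)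
    (hSI : ¬ S ⊆ I) : Set.colon (I ∩ S) S = I := by
  refine Set.Subset.antisymm ?_ fun a ha b hb ↦
    ⟨hI.1.mul_mem_right trivial ha, hS.mul_mem_left trivial hb⟩
  have hcolon : Set.colon (I ∩ S) S ∩ S ⊆ I :=
    (hS.colon_inter_eq (hI.1.inter hS)).subset.trans Set.inter_subset_left
  exact (hI.2.2 _ S (hS.colon (hS.of_subideal (hI.1.inter hS))) hS hcolon).resolve_right hSI

end IsPrimeIdealIn

/-- for a closed two-sided ideal `I''` of a C*-algebra `A`, the map
`I ↦ I ∩ I''` is a bijection from the prime ideals `I` of `A` with `I'' ⊄ I`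
onto the prime ideals of the C*-algebra `I''`; its inverse sends a prime ideal
`P` of `I''` to `{a ∈ A : ab ∈ P for all b ∈ I''}`. -/
theorem stmt9 {A : Type*} [NonUnitalNormedRing A] [StarRing A] [CStarRing A]
    [NormedSpace ℂ A] [IsScalarTower ℂ A A] [SMulCommClass ℂ A A] [StarModule ℂ A]
    [CompleteSpace A]
    (I'' : Set A) (hI'' : IsClosedIdealIn Set.univ I'') :
    Set.BijOn (fun I : Set A => I ∩ I'')
      {I | IsPrimeIdealIn Set.univ I ∧ ¬ I'' ⊆ I}
      {P | IsPrimeIdealIn I'' P} ∧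
    ∀ P, IsPrimeIdealIn I'' P →
      ∀ I, (IsPrimeIdealIn Set.univ I ∧ ¬ I'' ⊆ I) → I ∩ I'' = P →
        I = {a : A | ∀ b ∈ I'', a * b ∈ P} := by
  let _ : NonUnitalCStarAlgebra A := {}
  have hinv : Set.InvOn (Set.colon · I'') (· ∩ I'')
      {I | IsPrimeIdealIn Set.univ I ∧ ¬ I'' ⊆ I} {P | IsPrimeIdealIn I'' P} :=
    ⟨fun I hI ↦ hI.1.colon_inter_eq_self hI'' hI.2, fun P hP ↦ hI''.colon_inter_eq hP.1⟩
  refine ⟨hinv.bijOn (fun I hI ↦ hI.1.inter hI'' hI.2) fun P hP ↦ hP.colon hI'', ?_⟩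
  rintro P - I hI rfl
  exact (hinv.1 hI).symm
end

section
/- Let σ : U → X be a local homeomorphism on an open subset U of a locally compact Hausdorff space X, and let {x_λ} be a net in X converging to x₀ such that for all λ, x_λ is periodic with l(x_λ) = l and p(x_λ) = m for fixed l ∈ ℕ and m ≥ 1. Then x₀ is periodic with l(x₀) = l, and p(x₀) divides m. -/
/-- `x` is periodic with period `p` (the minimal positive `n` such that
`σ^{k+n}(x) = σ^k(x)` for some `k`) and pre-period `l` (the minimal such `k`
for the period `p`). -/
def HasPeriodData {X : Type*} (σ : X → X) (U : Set X) (x : X) (p l : ℕ) : Prop :=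
  1 ≤ p ∧ x ∈ Un σ U (l + p) ∧ σ^[l + p] x = σ^[l] x ∧
    (∀ n, 1 ≤ n → (∃ k, x ∈ Un σ U (k + n) ∧ σ^[k + n] x = σ^[k] x) → p ≤ n) ∧
    (∀ k, x ∈ Un σ U (k + p) → σ^[k + p] x = σ^[k] x → l ≤ k)

lemma perGe {X : Type*} {σ : X → X} {x : X} {k p k' : ℕ} (h : σ^[k + p] x = σ^[k] x)
    (hk : k ≤ k') : σ^[k' + p] x = σ^[k'] x := by
  have h1 : k' + p = (k' - k) + (k + p) := by omega
  have h2 : k' = (k' - k) + k := by omega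
  rw [h1, Function.iterate_add_apply, h, ← Function.iterate_add_apply, ← h2]

lemma perMul {X : Type*} {σ : X → X} {x : X} {k p : ℕ} (h : σ^[k + p] x = σ^[k] x) (t : ℕ) :
    σ^[k + t * p] x = σ^[k] x := by
  induction t with
  | zero => simp
  | succ t ih =>
    have h2 := perGe h (Nat.le_add_right k (t * p))
    have e : k + (t + 1) * p = (k + t * p) + p := by ring
    rw [e, h2, ih]

/-- All iterates of an eventually periodic point lie in `U`. -/
lemma memUAll {X : Type*} {σ : X → X} {U : Set X} {x : X} {l p : ℕ} (hp : 1 ≤ p)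
    (hmem : x ∈ Un σ U (l + p)) (hper : σ^[l + p] x = σ^[l] x) :
    ∀ j, σ^[j] x ∈ U := by
  intro j
  induction j using Nat.strong_induction_on with
  | _ j ih =>
    by_cases hj : j < l + p
    · exact hmem j hj
    · push_neg at hj
      have h1 : σ^[j] x = σ^[j - p] x := by
        have e1 : j = (j - (l + p)) + (l + p) := by omega
        have e2 : j - (l + p) + l = j - p := by omega
        calc σ^[j] x = σ^[j - (l + p)] (σ^[l + p] x) := by
              rw [← Function.iterate_add_apply, ← e1]
          _ = σ^[j - (l + p)] (σ^[l] x) := by rw [hper]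
          _ = σ^[j - p] x := by rw [← Function.iterate_add_apply, e2]
      rw [h1]; exact ih (j - p) (by omega)

/-- Continuity of the `n`-th iterate on its natural domain. -/
lemma contIter {X : Type*} [TopologicalSpace X] {U : Set X} {σ : X → X}
    (hσ : IsLocalHomeomorphOn σ U) {x : X} : ∀ {n : ℕ}, x ∈ Un σ U n →
    ContinuousAt σ^[n] x := by
  intro n
  induction n with
  | zero => intro _; simpa using continuousAt_id
  | succ n ih =>
    intro hx
    have hx' : x ∈ Un σ U n := fun j hj => hx j (by omega)
    have h1 : ContinuousAt σ (σ^[n] x) := hσ.continuousAt (hx n (Nat.lt_succ_self n))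
    rw [Function.iterate_succ']
    exact h1.comp (ih hx')

/-- if a net `x_λ → x₀` consists of periodic points with constant
pre-period `l0` and constant period `m ≥ 1` (and the relevant iterates at `x₀`
are defined), then `x₀` is periodic with `l(x₀) = l0` and `p(x₀) ∣ m`. -/
theorem stmt10 {X : Type*} [TopologicalSpace X] [LocallyCompactSpace X] [T2Space X]
    {U : Set X} (hU : IsOpen U) {σ : X → X} (hσ : IsLocalHomeomorphOn σ U)
    {ι : Type*} (F : Filter ι) [F.NeBot] (xnet : ι → X) (x₀ : X)
    (hconv : Filter.Tendsto xnet F (nhds x₀))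
    (l0 m : ℕ) (hm : 1 ≤ m)
    (hdata : ∀ i, HasPeriodData σ U (xnet i) m l0)
    (hx₀ : x₀ ∈ Un σ U (l0 + m)) :
    ∃ p, p ∣ m ∧ HasPeriodData σ U x₀ p l0 := by
  classical
  -- Step 1: the relation passes to the limit.
  have heq : ∀ i, σ^[l0 + m] (xnet i) = σ^[l0] (xnet i) := fun i => (hdata i).2.2.1
  have hx₀' : x₀ ∈ Un σ U l0 := fun j hj => hx₀ j (by omega)
  have t1 : Filter.Tendsto (fun i => σ^[l0 + m] (xnet i)) F (nhds (σ^[l0 + m] x₀)) :=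
    ((contIter hσ hx₀).tendsto).comp hconv
  have t2 : Filter.Tendsto (fun i => σ^[l0 + m] (xnet i)) F (nhds (σ^[l0] x₀)) :=
    (((contIter hσ hx₀').tendsto).comp hconv).congr (fun i => (heq i).symm)
  have hrel : σ^[l0 + m] x₀ = σ^[l0] x₀ := tendsto_nhds_unique t1 t2
  -- Step 2: all iterates of x₀ are defined.
  have hall : ∀ j, σ^[j] x₀ ∈ U := memUAll hm hx₀ hrel
  have hallU : ∀ N, x₀ ∈ Un σ U N := fun N j _ => hall j
  -- Step 3: define the period p as the minimal one.
  have hex : ∃ n, 1 ≤ n ∧ ∃ k, σ^[k + n] x₀ = σ^[k] x₀ := ⟨m, hm, l0, hrel⟩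
  set p := Nat.find hex with hp_def
  obtain ⟨hp1, k₁, hk₁⟩ := Nat.find_spec hex
  -- Step 4: p divides m.
  have hdvd : p ∣ m := by
    set K := max k₁ l0 with hK
    have hKp : σ^[K + p] x₀ = σ^[K] x₀ := perGe hk₁ (le_max_left _ _)
    have hKm : σ^[K + m] x₀ = σ^[K] x₀ := perGe hrel (le_max_right _ _)
    have hr : σ^[K + m % p] x₀ = σ^[K] x₀ := by
      have h1 : σ^[(K + m % p) + p] x₀ = σ^[K + m % p] x₀ :=
        perGe hKp (Nat.le_add_right _ _)
      have h2 := perMul h1 (m / p)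
      have e : K + m % p + m / p * p = K + m := by
        have h := Nat.mod_add_div' m p
        omega
      rw [e] at h2
      rw [← h2, hKm]
    by_contra hnd
    have hr1 : 1 ≤ m % p := by
      rcases Nat.eq_zero_or_pos (m % p) with h | h
      · exact absurd (Nat.dvd_of_mod_eq_zero h) hnd
      · omega
    have := Nat.find_min hex (m := m % p) (Nat.mod_lt m hp1)
    exact this ⟨hr1, K, hr⟩
  -- Step 5: the relation with period p holds already at l0.
  have hl0p : σ^[l0 + p] x₀ = σ^[l0] x₀ := by
    have a : σ^[l0 + k₁ * m] x₀ = σ^[l0] x₀ := perMul hrel k₁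
    have b : σ^[(l0 + p) + k₁ * m] x₀ = σ^[l0 + p] x₀ :=
      perMul (perGe hrel (Nat.le_add_right _ _)) k₁
    have c : σ^[(l0 + k₁ * m) + p] x₀ = σ^[l0 + k₁ * m] x₀ :=
      perGe hk₁ (by nlinarith)
    calc σ^[l0 + p] x₀ = σ^[(l0 + p) + k₁ * m] x₀ := b.symm
      _ = σ^[(l0 + k₁ * m) + p] x₀ := by ring_nf
      _ = σ^[l0 + k₁ * m] x₀ := c
      _ = σ^[l0] x₀ := a
  -- Step 6: minimality of the pre-period l0, via local injectivity.
  have hlmin : ∀ k, x₀ ∈ Un σ U (k + p) → σ^[k + p] x₀ = σ^[k] x₀ → l0 ≤ k := by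
    intro k _ hk
    by_contra hlt
    push_neg at hlt
    have hl0pos : 1 ≤ l0 := by omega
    -- relation at l0 - 1 with period p, then with period m
    have h1 : σ^[(l0 - 1) + p] x₀ = σ^[l0 - 1] x₀ := perGe hk (by omega)
    obtain ⟨t, ht⟩ := hdvd
    have h2 : σ^[(l0 - 1) + m] x₀ = σ^[l0 - 1] x₀ := by
      have h3 := perMul h1 t
      have e : (l0 - 1) + t * p = (l0 - 1) + m := by rw [ht, Nat.mul_comm]
      rwa [e] at h3
    set z := σ^[l0 - 1] x₀ with hz_def
    have hzU : z ∈ U := hall _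
    obtain ⟨e, hze, hfe⟩ := hσ z hzU
    have hinj : Set.InjOn σ e.source := by rw [hfe]; exact e.injOn
    -- nets of iterates converge to z
    have ta : Filter.Tendsto (fun i => σ^[(l0 - 1) + m] (xnet i)) F (nhds z) := by
      have := ((contIter hσ (hallU ((l0 - 1) + m))).tendsto).comp hconv
      rwa [h2] at this
    have tb : Filter.Tendsto (fun i => σ^[l0 - 1] (xnet i)) F (nhds z) :=
      ((contIter hσ (hallU (l0 - 1))).tendsto).comp hconv
    have hnhds : e.source ∈ nhds z := e.open_source.mem_nhds hze
    have hevent : ∀ᶠ i in F, σ^[(l0 - 1) + m] (xnet i) ∈ e.source ∧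
        σ^[l0 - 1] (xnet i) ∈ e.source :=
      (ta.eventually_mem hnhds).and (tb.eventually_mem hnhds)
    obtain ⟨i, hia, hib⟩ := hevent.exists
    -- applying σ gives equal values, hence equality by injectivity
    have hsameσ : σ (σ^[(l0 - 1) + m] (xnet i)) = σ (σ^[l0 - 1] (xnet i)) := by
      have e1 : ((l0 - 1) + m) + 1 = l0 + m := by omega
      have e2 : (l0 - 1) + 1 = l0 := by omega
      calc σ (σ^[(l0 - 1) + m] (xnet i)) = σ^[((l0 - 1) + m) + 1] (xnet i) := by
            rw [Function.iterate_succ_apply']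
        _ = σ^[l0 + m] (xnet i) := by rw [e1]
        _ = σ^[l0] (xnet i) := heq i
        _ = σ^[(l0 - 1) + 1] (xnet i) := by rw [e2]
        _ = σ (σ^[l0 - 1] (xnet i)) := by rw [Function.iterate_succ_apply']
    have hsame : σ^[(l0 - 1) + m] (xnet i) = σ^[l0 - 1] (xnet i) := hinj hia hib hsameσ
    -- contradicts the minimality of the pre-period of xnet i
    have hmemi : xnet i ∈ Un σ U ((l0 - 1) + m) :=
      fun j hj => (hdata i).2.1 j (by omega)
    have := (hdata i).2.2.2.2 (l0 - 1) hmemi hsame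
    omega
  -- Assemble.
  refine ⟨p, hdvd, hp1, hallU (l0 + p), hl0p, ?_, hlmin⟩
  intro n hn ⟨k, _, hkn⟩
  exact Nat.find_min' hex ⟨hn, k, hkn⟩
end
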